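/- arXiv:2503.08312 — 2 statements merged into one kernel-verified Lean document; each statement's English description precedes it below -/
import Mathlib

section
/- The age of the countably infinite dimensional symplectic space (V, β) over GF(2) does not have the Ramsey property. Concretely: there exist finite-dimensional subspaces A ≤ B of V (one may take A = U and B = W) and a number of colors r (r = 3 suffices) such that for every finite-dimensional subspace C ≤ V there is a coloring ξ from the set of subspaces of C isometric to A into r colors with the property that for every subspace B' ≤ C isometric to B there exist subspaces A', A'' ≤ B', both isometric to A, with ξ(A') ≠ ξ(A''). -/
open Module Submodule

/-- Two subspaces `X, Y` of `V` are isometric with respect to the bilinear form `β`: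
there is a linear isomorphism `X ≃ Y` preserving `β`. -/
def IsIsometric {V : Type*} [AddCommGroup V] [Module (ZMod 2) V]
    (β : V →ₗ[ZMod 2] V →ₗ[ZMod 2] ZMod 2) (X Y : Submodule (ZMod 2) V) : Prop :=
  ∃ f : X ≃ₗ[ZMod 2] Y, ∀ x y : X, β (x : V) (y : V) = β (f x : V) (f y : V)

/-!
Since `β` is alternating and we are in characteristic `2`, `β = B + Bᵀ` for the strictly upper
triangular half `B` of `β` in the basis `b`, so `q x = B x x` is a quadratic refinement of `β`:
`q (x + y) = q x + q y + β x y`. Colour a copy of `U` by the value of `q` on the nonzero vector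
of its radical. A copy of `W` has a symplectic basis `e₁, e₁*, e₂, e₂*, e₃, e₃*`, and each of
`e₁, e₁*, e₁ + e₁*, e₂, e₃, e₂ + e₃` spans the radical of a copy of `U` inside it. As
`β e₁ e₁* = 1`, the values of `q` on `e₁, e₁*, e₁ + e₁*` sum to `1`, so one of them is `1`; as
`β e₂ e₃ = 0`, the values on `e₂, e₃, e₂ + e₃` sum to `0`, so one of them is `0`. Hence both
colours occur on the copies of `U` in every copy of `W`.
-/

open Matrix

namespace LinearMap

variable {R M ι : Type*} [CommRing R] [AddCommGroup M] [Module R M]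

def gram (β : M →ₗ[R] M →ₗ[R] R) (v : ι → M) : Matrix ι ι R :=
  Matrix.of fun i j => β (v i) (v j)

@[simp]
theorem gram_apply (β : M →ₗ[R] M →ₗ[R] R) (v : ι → M) (i j : ι) :
    β.gram v i j = β (v i) (v j) := rfl

theorem apply_linearCombination_left [Fintype ι] (β : M →ₗ[R] M →ₗ[R] R) (v : ι → M)
    (c : ι → R) (j : ι) :
    β (Fintype.linearCombination R v c) (v j) = (c ᵥ* β.gram v) j := by
  simp [Fintype.linearCombination_apply, vecMul, dotProduct, map_sum]

theorem IsAlt.apply_comm [CharP R 2] {β : M →ₗ[R] M →ₗ[R] R} (hβ : β.IsAlt) (x y : M) :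
    β x y = β y x := by
  rw [← hβ.neg, CharTwo.neg_eq]

def IsQuadraticRefinement (β : M →ₗ[R] M →ₗ[R] R) (q : M → R) : Prop :=
  ∀ x y, q (x + y) = q x + q y + β x y

theorem IsAlt.exists_isQuadraticRefinement [CharP R 2] (b : Basis ι R M)
    {β : M →ₗ[R] M →ₗ[R] R} (hβ : β.IsAlt) : ∃ q, β.IsQuadraticRefinement q := by
  let : LinearOrder ι := WellOrderingRel.isWellOrder.linearOrder
  let B : M →ₗ[R] M →ₗ[R] R :=
    b.constr R fun i => b.constr R fun j => if i < j then β (b i) (b j) else 0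
  have hB : β = B + B.flip := by
    refine b.ext fun i => b.ext fun j => ?_
    rcases lt_trichotomy i j with h | rfl | h
    · simp [B, h, h.not_gt]
    · simp [B, hβ.self_eq_zero]
    · simp [B, h, h.not_gt, hβ.apply_comm (b i)]
  refine ⟨fun x => B x x, fun x y => ?_⟩
  rw [hB]
  simp only [map_add, add_apply, flip_apply]
  ring

end LinearMap

section

variable {V ι : Type*} [AddCommGroup V] [Module (ZMod 2) V]
  {β : V →ₗ[ZMod 2] V →ₗ[ZMod 2] ZMod 2}

theorem isIsometric_span_of_gram_eq {v w : ι → V} (hv : LinearIndependent (ZMod 2) v)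
    (hw : LinearIndependent (ZMod 2) w) (h : β.gram v = β.gram w) :
    IsIsometric β (span (ZMod 2) (Set.range v)) (span (ZMod 2) (Set.range w)) := by
  let bv := Basis.span hv
  let bw := Basis.span hw
  let f := bv.equiv bw (Equiv.refl ι)
  refine ⟨f, fun x y => ?_⟩
  let Sv := span (ZMod 2) (Set.range v)
  let Sw := span (ZMod 2) (Set.range w)
  have key : β.compl₁₂ Sv.subtype Sv.subtype
      = β.compl₁₂ (Sw.subtype ∘ₗ f.toLinearMap) (Sw.subtype ∘ₗ f.toLinearMap) := by
    have hf : ∀ i, f (bv i) = bw i := fun i => bv.equiv_apply i bw _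
    refine bv.ext fun i => bv.ext fun j => ?_
    simp only [LinearMap.compl₁₂_apply, LinearMap.coe_comp, Function.comp_apply,
      LinearEquiv.coe_coe, hf, subtype_apply]
    simp only [bv, bw, Basis.span_apply]
    exact congrFun₂ h i j
  exact LinearMap.congr_fun₂ key x y

theorem IsIsometric.exists_gram_eq {X Y : Submodule (ZMod 2) V} (h : IsIsometric β X Y)
    {v : ι → V} (hv : ∀ i, v i ∈ Y) : ∃ w : ι → V, (∀ i, w i ∈ X) ∧ β.gram w = β.gram v := by
  obtain ⟨f, hf⟩ := h
  refine ⟨fun i => f.symm ⟨v i, hv i⟩, fun i => (f.symm _).2, ?_⟩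
  ext i j
  simp [hf]

/-- The Gram matrix of the basis `e₁ + e₂, e₁, e₁* + e₂*, e₃, e₃*` of `U`. -/
def gramU : Matrix (Fin 5) (Fin 5) (ZMod 2) :=
  !![0, 0, 0, 0, 0; 0, 0, 1, 0, 0; 0, 1, 0, 0, 0; 0, 0, 0, 0, 1; 0, 0, 0, 1, 0]

/-- The Gram matrix of the basis `e₁, e₁*, e₂, e₂*, e₃, e₃*` of `W`. -/
def gramW : Matrix (Fin 6) (Fin 6) (ZMod 2) :=
  !![0, 1, 0, 0, 0, 0; 1, 0, 0, 0, 0, 0; 0, 0, 0, 1, 0, 0; 0, 0, 1, 0, 0, 0;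
    0, 0, 0, 0, 0, 1; 0, 0, 0, 0, 1, 0]

theorem eq_single_of_vecMul_gramU_eq_zero {c : Fin 5 → ZMod 2} (h : c ᵥ* gramU = 0) :
    c = Pi.single 0 (c 0) := by
  revert c
  decide

variable (β) in
def IsUFrame (v : Fin 5 → V) : Prop :=
  β.gram v = gramU ∧ v 0 ≠ 0

namespace IsUFrame

variable {v : Fin 5 → V}

theorem eq_single_of_forall_apply_eq_zero (hv : IsUFrame β v) {c : Fin 5 → ZMod 2}
    (hc : ∀ j, β (Fintype.linearCombination (ZMod 2) v c) (v j) = 0) :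
    c = Pi.single 0 (c 0) := by
  refine eq_single_of_vecMul_gramU_eq_zero (funext fun j => ?_)
  rw [← hv.1, ← β.apply_linearCombination_left, hc, Pi.zero_apply]

theorem linearCombination_eq_smul (hv : IsUFrame β v) {c : Fin 5 → ZMod 2}
    (hc : ∀ j, β (Fintype.linearCombination (ZMod 2) v c) (v j) = 0) :
    Fintype.linearCombination (ZMod 2) v c = c 0 • v 0 := by
  conv_lhs => rw [hv.eq_single_of_forall_apply_eq_zero hc]
  exact Fintype.linearCombination_apply_single ..

theorem linearIndependent (hv : IsUFrame β v) : LinearIndependent (ZMod 2) v := by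
  refine linearIndependent_iff_injective_fintypeLinearCombination.mpr ?_
  rw [← LinearMap.ker_eq_bot, LinearMap.ker_eq_bot']
  intro c hc
  have hrad : ∀ j, β (Fintype.linearCombination (ZMod 2) v c) (v j) = 0 := by simp [hc]
  have hc0 : c 0 = 0 :=
    (smul_eq_zero.mp (hc ▸ hv.linearCombination_eq_smul hrad).symm).resolve_right hv.2
  rw [hv.eq_single_of_forall_apply_eq_zero hrad, hc0, Pi.single_zero]

theorem eq_zero_or_eq_of_mem_radical (hv : IsUFrame β v) {x : V}
    (hx : x ∈ span (ZMod 2) (Set.range v))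
    (hrad : ∀ y ∈ span (ZMod 2) (Set.range v), β x y = 0) : x = 0 ∨ x = v 0 := by
  rw [← Fintype.range_linearCombination] at hx
  obtain ⟨c, rfl⟩ := hx
  rw [hv.linearCombination_eq_smul fun j => hrad _ (subset_span ⟨j, rfl⟩)]
  rcases (by decide : ∀ z : ZMod 2, z = 0 ∨ z = 1) (c 0) with h | h <;> simp [h]

theorem apply_zero_left (hv : IsUFrame β v) {y : V} (hy : y ∈ span (ZMod 2) (Set.range v)) :
    β (v 0) y = 0 := by
  refine (span_le (p := LinearMap.ker (β (v 0)))).mpr ?_ hy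
  rintro _ ⟨j, rfl⟩
  exact (congrFun₂ hv.1 0 j).trans (by fin_cases j <;> rfl)

theorem isIsometric_span {w : Fin 5 → V} (hv : IsUFrame β v) (hw : IsUFrame β w) :
    IsIsometric β (span (ZMod 2) (Set.range v)) (span (ZMod 2) (Set.range w)) :=
  isIsometric_span_of_gram_eq hv.linearIndependent hw.linearIndependent (hv.1.trans hw.1.symm)

end IsUFrame

variable (β) in
open Classical in
noncomputable def radicalColor (q : V → ZMod 2) (X : Submodule (ZMod 2) V) : Fin 2 :=
  if ∃ x ∈ X, x ≠ 0 ∧ (∀ y ∈ X, β x y = 0) ∧ q x = 1 then 1 else 0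

theorem IsUFrame.radicalColor_eq_one_iff {v : Fin 5 → V} (hv : IsUFrame β v) (q : V → ZMod 2) :
    radicalColor β q (span (ZMod 2) (Set.range v)) = 1 ↔ q (v 0) = 1 := by
  unfold radicalColor
  split_ifs with h
  · obtain ⟨x, hx, hx0, hrad, hqx⟩ := h
    rcases hv.eq_zero_or_eq_of_mem_radical hx hrad with rfl | rfl
    · exact absurd rfl hx0
    · simpa using hqx
  · refine ⟨fun h01 => absurd h01 (by decide), fun hq => absurd ?_ h⟩
    exact ⟨v 0, subset_span ⟨0, rfl⟩, hv.2, fun y hy => hv.apply_zero_left hy, hq⟩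

def uFramesOfSymplectic (u : Fin 6 → V) : Fin 6 → Fin 5 → V :=
  ![![u 0, u 2, u 3, u 4, u 5], ![u 1, u 2, u 3, u 4, u 5], ![u 0 + u 1, u 2, u 3, u 4, u 5],
    ![u 2, u 0, u 1, u 4, u 5], ![u 4, u 0, u 1, u 2, u 3],
    ![u 2 + u 4, u 0, u 1, u 2, u 3 + u 5]]

theorem isUFrame_uFramesOfSymplectic {u : Fin 6 → V} (hu : β.gram u = gramW) (k : Fin 6) :
    IsUFrame β (uFramesOfSymplectic u k) := by
  have h : ∀ i j, β (u i) (u j) = gramW i j := fun i j => congrFun₂ hu i j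
  refine ⟨?_, fun h0 => ?_⟩
  · ext i j
    fin_cases k <;> fin_cases i <;> fin_cases j <;>
      simp [uFramesOfSymplectic, h, gramW, gramU] <;> decide
  · have hpair : β (uFramesOfSymplectic u k 0) (![u 1, u 0, u 1, u 3, u 5, u 3] k) = 1 := by
      fin_cases k <;> simp [uFramesOfSymplectic, h, gramW]
    simp [h0] at hpair

variable {q : V → ZMod 2}

theorem eq_one_or_eq_one_or_add_eq_one (hq : β.IsQuadraticRefinement q) {x y : V}
    (h : β x y = 1) :
    q x = 1 ∨ q y = 1 ∨ q (x + y) = 1 := by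
  rw [hq x y, h]
  generalize q x = a
  generalize q y = b
  revert a b
  decide

theorem eq_zero_or_eq_zero_or_add_eq_zero (hq : β.IsQuadraticRefinement q)
    {x y : V} (h : β x y = 0) :
    q x = 0 ∨ q y = 0 ∨ q (x + y) = 0 := by
  rw [hq x y, h]
  generalize q x = a
  generalize q y = b
  revert a b
  decide

theorem exists_uFramesOfSymplectic_eq_one (hq : β.IsQuadraticRefinement q)
    {u : Fin 6 → V} (hu : β.gram u = gramW) :
    ∃ k, q (uFramesOfSymplectic u k 0) = 1 := by
  rcases eq_one_or_eq_one_or_add_eq_one hq (congrFun₂ hu 0 1) with h | h | h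
  exacts [⟨0, h⟩, ⟨1, h⟩, ⟨2, h⟩]

theorem exists_uFramesOfSymplectic_eq_zero (hq : β.IsQuadraticRefinement q)
    {u : Fin 6 → V} (hu : β.gram u = gramW) :
    ∃ k, q (uFramesOfSymplectic u k 0) = 0 := by
  rcases eq_zero_or_eq_zero_or_add_eq_zero hq (congrFun₂ hu 2 4) with h | h | h
  exacts [⟨3, h⟩, ⟨4, h⟩, ⟨5, h⟩]

theorem span_uFramesOfSymplectic_le {X : Submodule (ZMod 2) V} {u : Fin 6 → V}
    (hu : ∀ j, u j ∈ X) (k : Fin 6) :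
    span (ZMod 2) (Set.range (uFramesOfSymplectic u k)) ≤ X := by
  refine span_le.mpr (Set.range_subset_iff.mpr fun i => ?_)
  fin_cases k <;> fin_cases i <;> simp [uFramesOfSymplectic, hu, add_mem]

end

/-- The age of the countably infinite dimensional symplectic space `(V, β)` over `GF(2)`
does not have the Ramsey property: there are finite-dimensional subspaces `A ≤ B` and a
number of colors `r` such that for every finite-dimensional `C ≤ V` some `r`-coloring of
the copies of `A` in `C` is non-monochromatic on every copy of `B` inside `C`.
Here `V` has a basis `{e_i, e_i*}` (encoded as `b (i, false)` and `b (i, true)`) of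
pairwise orthogonal hyperbolic pairs for the alternating form `β`. -/
theorem symplectic_age_not_ramsey
    (V : Type*) [AddCommGroup V] [Module (ZMod 2) V]
    (β : V →ₗ[ZMod 2] V →ₗ[ZMod 2] ZMod 2)
    (b : Basis (ℕ × Bool) (ZMod 2) V)
    (halt : ∀ v : V, β v v = 0)
    (hef : ∀ i j : ℕ, β (b (i, false)) (b (j, true)) = if i = j then 1 else 0)
    (hee : ∀ i j : ℕ, β (b (i, false)) (b (j, false)) = 0)
    (hff : ∀ i j : ℕ, β (b (i, true)) (b (j, true)) = 0) :
    ∃ A B : Submodule (ZMod 2) V, A ≤ B ∧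
      FiniteDimensional (ZMod 2) A ∧ FiniteDimensional (ZMod 2) B ∧
      ∃ r : ℕ,
        ∀ C : Submodule (ZMod 2) V, FiniteDimensional (ZMod 2) C →
          ∃ ξ : Submodule (ZMod 2) V → Fin r,
            ∀ B' : Submodule (ZMod 2) V, B' ≤ C → IsIsometric β B' B →
              ∃ A' A'' : Submodule (ZMod 2) V,
                A' ≤ B' ∧ A'' ≤ B' ∧ IsIsometric β A' A ∧ IsIsometric β A'' A ∧
                ξ A' ≠ ξ A'' := by
  obtain ⟨q, hq⟩ := LinearMap.IsAlt.exists_isQuadraticRefinement b halt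
  let u : Fin 6 → V :=
    ![b (0, false), b (0, true), b (1, false), b (1, true), b (2, false), b (2, true)]
  have hu : β.gram u = gramW := by
    ext i j
    fin_cases i <;> fin_cases j <;>
      simp [u, gramW, hef, hee, hff, LinearMap.IsAlt.apply_comm halt (b (_, true))]
  have hframe0 := isUFrame_uFramesOfSymplectic hu 0
  have hu_mem : ∀ j, u j ∈ span (ZMod 2) (Set.range u) := fun j => subset_span ⟨j, rfl⟩
  refine ⟨span (ZMod 2) (Set.range (uFramesOfSymplectic u 0)), span (ZMod 2) (Set.range u),
    span_uFramesOfSymplectic_le hu_mem 0, .span_of_finite _ (Set.finite_range _),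
    .span_of_finite _ (Set.finite_range _), 2,
    fun _ _ => ⟨radicalColor β q, fun B' _ hB' => ?_⟩⟩
  obtain ⟨u', hu'B', hu'⟩ := hB'.exists_gram_eq hu_mem
  rw [hu] at hu'
  obtain ⟨k, hk⟩ := exists_uFramesOfSymplectic_eq_one hq hu'
  obtain ⟨l, hl⟩ := exists_uFramesOfSymplectic_eq_zero hq hu'
  have hframe := isUFrame_uFramesOfSymplectic hu'
  refine ⟨_, _, span_uFramesOfSymplectic_le hu'B' k,
    span_uFramesOfSymplectic_le hu'B' l, (hframe k).isIsometric_span hframe0,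
    (hframe l).isIsometric_span hframe0, ?_⟩
  rw [((hframe k).radicalColor_eq_one_iff q).mpr hk, ne_comm, Ne,
    (hframe l).radicalColor_eq_one_iff, hl]
  decide
end

section
/- There exists a coloring c of the set of all subspaces of V that are isometric to U into 3 colors such that for every subspace W' ≤ V isometric to W, W' contains two subspaces, each isometric to U, which receive different colors under c; in particular no copy of W in V is monochromatic with respect to c. -/
open Module Submodule

section Aux
variable {V : Type*} [AddCommGroup V] [Module (ZMod 2) V]

lemma negV (v : V) : -v = v := by
  have h : (-1 : ZMod 2) = 1 := by decide
  rw [← neg_one_smul (ZMod 2) v, h, one_smul]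

lemma addV (v : V) : v + v = 0 := by
  rw [add_eq_zero_iff_eq_neg, negV]

lemma z2 : ∀ a c : ZMod 2, a + c = 0 → c = a := by decide

variable (β : V →ₗ[ZMod 2] V →ₗ[ZMod 2] ZMod 2)

lemma symmB (halt : ∀ v : V, β v v = 0) (u v : V) : β u v = β v u := by
  have h := halt (u + v)
  simp only [map_add, LinearMap.add_apply, halt, zero_add, add_zero] at h
  exact (z2 _ _ h)

/-- symplectic transvection -/
def Tmap (v : V) : V →ₗ[ZMod 2] V := LinearMap.id + (β v).smulRight v

@[simp] lemma Tmap_apply (v x : V) : Tmap β v x = x + β v x • v := rfl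

lemma Tmap_Tmap (halt : ∀ v : V, β v v = 0) (v x : V) : Tmap β v (Tmap β v x) = x := by
  have h1 : β v (Tmap β v x) = β v x := by
    simp only [Tmap_apply, map_add, map_smul, smul_eq_mul, halt, mul_zero, add_zero]
  rw [Tmap_apply, h1, Tmap_apply, add_assoc, addV, add_zero]

lemma Tmap_iso (halt : ∀ v : V, β v v = 0) (v x y : V) :
    β (Tmap β v x) (Tmap β v y) = β x y := by
  simp only [Tmap_apply, map_add, map_smul, LinearMap.add_apply, LinearMap.smul_apply,
    halt, smul_zero, add_zero, smul_eq_mul, mul_zero]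
  rw [symmB β halt x v, mul_comm ((β v) y), add_assoc, addV, add_zero]

/-- transvection as linear equivalence -/
def Tequiv (halt : ∀ v : V, β v v = 0) (v : V) : V ≃ₗ[ZMod 2] V :=
  LinearEquiv.ofLinear (Tmap β v) (Tmap β v)
    (by ext x; simp only [LinearMap.comp_apply, LinearMap.id_coe, id_eq]; exact Tmap_Tmap β halt v x)
    (by ext x; simp only [LinearMap.comp_apply, LinearMap.id_coe, id_eq]; exact Tmap_Tmap β halt v x)

@[simp] lemma Tequiv_apply (halt : ∀ v : V, β v v = 0) (v x : V) :
    Tequiv β halt v x = x + β v x • v := rfl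

lemma Tequiv_send (halt : ∀ v : V, β v v = 0) (r s : V) (h : β r s = 1) :
    Tequiv β halt (r + s) r = s := by
  simp only [Tequiv_apply, map_add, LinearMap.add_apply, halt, zero_add]
  rw [symmB β halt s r, h, one_smul, ← add_assoc, addV, zero_add]

end Aux

section Coord
variable {V : Type*} [AddCommGroup V] [Module (ZMod 2) V]
variable (β : V →ₗ[ZMod 2] V →ₗ[ZMod 2] ZMod 2)
variable (b : Basis (ℕ × Bool) (ZMod 2) V)

/-- the quadratic form `q(v) = ∑ x_i y_i` -/
noncomputable def Qf (w : V) : ZMod 2 :=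
  ∑ i ∈ ((b.repr w).support.image Prod.fst), (b.repr w (i, false)) * (b.repr w (i, true))

variable (halt : ∀ v : V, β v v = 0)
variable (hef : ∀ i j : ℕ, β (b (i, false)) (b (j, true)) = if i = j then 1 else 0)
variable (hee : ∀ i j : ℕ, β (b (i, false)) (b (j, false)) = 0)
variable (hff : ∀ i j : ℕ, β (b (i, true)) (b (j, true)) = 0)

include halt hef hee hff in
lemma beta_bb (p q : ℕ × Bool) :
    β (b p) (b q) = if q = (p.1, !p.2) then 1 else 0 := by
  rcases p with ⟨i, bi⟩; rcases q with ⟨j, bj⟩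
  cases bi <;> cases bj <;>
    simp [hef, hee, hff, symmB β halt (b (i, true)) (b (j, false)), Prod.ext_iff, eq_comm]

include halt hef hee hff in
lemma beta_basis (p : ℕ × Bool) (w : V) :
    β (b p) w = b.repr w (p.1, !p.2) := by
  conv_lhs => rw [← b.linearCombination_repr w]
  rw [Finsupp.linearCombination_apply, Finsupp.sum, map_sum]
  simp only [map_smul, smul_eq_mul, beta_bb β b halt hef hee hff]
  simp only [mul_ite, mul_one, mul_zero, Finset.sum_ite_eq']
  by_cases h : (p.1, !p.2) ∈ (b.repr w).support
  · rw [if_pos h]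
  · rw [if_neg h, eq_comm, ← Finsupp.notMem_support_iff]; exact h

include halt hef hee hff in
lemma beta_eval (v w : V) :
    β v w = ∑ p ∈ (b.repr v).support, (b.repr v p) * (b.repr w (p.1, !p.2)) := by
  conv_lhs => rw [← b.linearCombination_repr v]
  rw [Finsupp.linearCombination_apply, Finsupp.sum, map_sum]
  simp only [map_smul, LinearMap.sum_apply, LinearMap.smul_apply, smul_eq_mul]
  exact Finset.sum_congr rfl fun p _ => by
    rw [beta_basis β b halt hef hee hff]

include halt hef hee hff in
lemma beta_basis_right (w : V) (q : ℕ × Bool) :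
    β w (b q) = b.repr w (q.1, !q.2) := by
  rw [symmB β halt, beta_basis β b halt hef hee hff]

end Coord

section Quad
variable {V : Type*} [AddCommGroup V] [Module (ZMod 2) V]
variable (β : V →ₗ[ZMod 2] V →ₗ[ZMod 2] ZMod 2)
variable (b : Basis (ℕ × Bool) (ZMod 2) V)
variable (halt : ∀ v : V, β v v = 0)
variable (hef : ∀ i j : ℕ, β (b (i, false)) (b (j, true)) = if i = j then 1 else 0)
variable (hee : ∀ i j : ℕ, β (b (i, false)) (b (j, false)) = 0)
variable (hff : ∀ i j : ℕ, β (b (i, true)) (b (j, true)) = 0)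

lemma Qf_subset (w : V) (S : Finset ℕ) (h : (b.repr w).support.image Prod.fst ⊆ S) :
    Qf b w = ∑ i ∈ S, (b.repr w (i, false)) * (b.repr w (i, true)) := by
  refine Finset.sum_subset h fun i _ hi => ?_
  have : (i, false) ∉ (b.repr w).support := fun hc => hi (Finset.mem_image_of_mem Prod.fst hc)
  rw [Finsupp.notMem_support_iff.mp this, zero_mul]

include halt hef hee hff in
lemma beta_eval_S (v w : V) (S : Finset ℕ)
    (hv : (b.repr v).support.image Prod.fst ⊆ S) :
    β v w = ∑ i ∈ S, ((b.repr v (i, false)) * (b.repr w (i, true)) +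
      (b.repr v (i, true)) * (b.repr w (i, false))) := by
  rw [beta_eval β b halt hef hee hff]
  have hsub : (b.repr v).support ⊆ S ×ˢ (Finset.univ : Finset Bool) := by
    intro p hp
    rw [Finset.mem_product]
    exact ⟨hv (Finset.mem_image_of_mem Prod.fst hp), Finset.mem_univ _⟩
  rw [Finset.sum_subset hsub fun p _ hp => by
    rw [Finsupp.notMem_support_iff.mp hp, zero_mul]]
  rw [Finset.sum_product]
  refine Finset.sum_congr rfl fun i _ => ?_
  rw [Fintype.sum_bool]
  exact add_comm _ _

include halt hef hee hff in
lemma Qf_polar (v w : V) : Qf b (v + w) = Qf b v + Qf b w + β v w := by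
  set S : Finset ℕ := (((b.repr v).support.image Prod.fst) ∪ ((b.repr w).support.image Prod.fst))
      ∪ ((b.repr (v + w)).support.image Prod.fst) with hS
  rw [Qf_subset b (v+w) S (Finset.subset_union_right),
    Qf_subset b v S (le_trans Finset.subset_union_left Finset.subset_union_left),
    Qf_subset b w S (le_trans Finset.subset_union_right Finset.subset_union_left),
    beta_eval_S β b halt hef hee hff v w S
      (le_trans Finset.subset_union_left Finset.subset_union_left)]
  rw [← Finset.sum_add_distrib, ← Finset.sum_add_distrib]
  refine Finset.sum_congr rfl fun i _ => ?_
  simp only [map_add, Finsupp.add_apply]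
  ring

end Quad

lemma z2cases : ∀ a : ZMod 2, a = 0 ∨ a = 1 := by decide

section Main
variable {V : Type*} [AddCommGroup V] [Module (ZMod 2) V]
variable (β : V →ₗ[ZMod 2] V →ₗ[ZMod 2] ZMod 2)
variable (b : Basis (ℕ × Bool) (ZMod 2) V)
variable (halt : ∀ v : V, β v v = 0)
variable (hef : ∀ i j : ℕ, β (b (i, false)) (b (j, true)) = if i = j then 1 else 0)
variable (hee : ∀ i j : ℕ, β (b (i, false)) (b (j, false)) = 0)
variable (hff : ∀ i j : ℕ, β (b (i, true)) (b (j, true)) = 0)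

include halt hef hee hff in
/-- the radical of `U₀` contains `e₁ + e₂` -/
lemma radU₀_mem : ∀ u ∈ (span (ZMod 2) ({b (1, false), b (2, false), b (3, false),
      b (1, true) + b (2, true), b (3, true)} : Set V)),
    β (b (1, false) + b (2, false)) u = 0 := by
  intro u hu
  have hle : (span (ZMod 2) ({b (1, false), b (2, false), b (3, false),
      b (1, true) + b (2, true), b (3, true)} : Set V)) ≤
      LinearMap.ker (β (b (1, false) + b (2, false))) := by
    rw [span_le]
    intro v hv
    simp only [Set.mem_insert_iff, Set.mem_singleton_iff] at hv
    have h2 : (1 + 1 : ZMod 2) = 0 := by decide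
    rcases hv with rfl | rfl | rfl | rfl | rfl <;>
      simp [map_add, LinearMap.add_apply, hef, hee, hff, h2]
  exact LinearMap.mem_ker.mp (hle hu)


include halt hef hee hff in
/-- the radical of `U₀` consists of `0` and `e₁ + e₂` -/
lemma radU₀_uniq : ∀ v ∈ (span (ZMod 2) ({b (1, false), b (2, false), b (3, false),
      b (1, true) + b (2, true), b (3, true)} : Set V)),
    (∀ w ∈ (span (ZMod 2) ({b (1, false), b (2, false), b (3, false),
      b (1, true) + b (2, true), b (3, true)} : Set V)), β v w = 0) →
    v = 0 ∨ v = b (1, false) + b (2, false) := by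
  intro v hv hrad
  have hgen : ∀ g ∈ ({b (1, false), b (2, false), b (3, false),
      b (1, true) + b (2, true), b (3, true)} : Set V), g ∈ (span (ZMod 2) ({b (1, false),
      b (2, false), b (3, false), b (1, true) + b (2, true), b (3, true)} : Set V)) :=
    fun g hg => subset_span hg
  have h1t : b.repr v (1, true) = 0 := by
    have h := hrad _ (hgen (b (1, false)) (by simp))
    rw [beta_basis_right β b halt hef hee hff] at h
    exact h
  have h2t : b.repr v (2, true) = 0 := by
    have h := hrad _ (hgen (b (2, false)) (by simp))
    rw [beta_basis_right β b halt hef hee hff] at h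
    exact h
  have h3t : b.repr v (3, true) = 0 := by
    have h := hrad _ (hgen (b (3, false)) (by simp))
    rw [beta_basis_right β b halt hef hee hff] at h
    exact h
  have h3f : b.repr v (3, false) = 0 := by
    have h := hrad _ (hgen (b (3, true)) (by simp))
    rw [beta_basis_right β b halt hef hee hff] at h
    exact h
  have h12 : b.repr v (2, false) = b.repr v (1, false) := by
    apply z2
    have := hrad _ (hgen (b (1, true) + b (2, true)) (by simp))
    rw [map_add, beta_basis_right β b halt hef hee hff v (1, true),
      beta_basis_right β b halt hef hee hff v (2, true)] at this
    simpa using this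
  have hout : ∀ p : ℕ × Bool, p.1 ≠ 1 → p.1 ≠ 2 → p.1 ≠ 3 → b.repr v p = 0 := by
    intro p hp1 hp2 hp3
    have hle : (span (ZMod 2) ({b (1, false), b (2, false), b (3, false),
        b (1, true) + b (2, true), b (3, true)} : Set V)) ≤ LinearMap.ker (b.coord p) := by
      rw [span_le]
      intro w hw
      simp only [Set.mem_insert_iff, Set.mem_singleton_iff] at hw
      rcases hw with rfl | rfl | rfl | rfl | rfl
      · simp only [SetLike.mem_coe, LinearMap.mem_ker, Basis.coord_apply, Basis.repr_self]
        exact Finsupp.single_eq_of_ne (by rintro rfl; exact hp1 rfl)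
      · simp only [SetLike.mem_coe, LinearMap.mem_ker, Basis.coord_apply, Basis.repr_self]
        exact Finsupp.single_eq_of_ne (by rintro rfl; exact hp2 rfl)
      · simp only [SetLike.mem_coe, LinearMap.mem_ker, Basis.coord_apply, Basis.repr_self]
        exact Finsupp.single_eq_of_ne (by rintro rfl; exact hp3 rfl)
      · simp only [SetLike.mem_coe, LinearMap.mem_ker, Basis.coord_apply, map_add,
          Basis.repr_self, Finsupp.add_apply]
        rw [Finsupp.single_eq_of_ne (by rintro rfl; exact hp1 rfl),
          Finsupp.single_eq_of_ne (by rintro rfl; exact hp2 rfl), add_zero]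
      · simp only [SetLike.mem_coe, LinearMap.mem_ker, Basis.coord_apply, Basis.repr_self]
        exact Finsupp.single_eq_of_ne (by rintro rfl; exact hp3 rfl)
    have := hle hv
    simpa using this
  have hv' : v = b.repr v (1, false) • (b (1, false) + b (2, false)) := by
    apply b.repr.injective
    ext p
    rcases p with ⟨i, t⟩
    simp only [map_smul, map_add, Basis.repr_self, Finsupp.smul_apply, Finsupp.add_apply,
      Finsupp.single_apply, smul_eq_mul]
    by_cases hi1 : i = 1
    · subst hi1
      cases t
      · simp
      · simp [h1t]
    · by_cases hi2 : i = 2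
      · subst hi2
        cases t
        · simp [h12, Prod.ext_iff]
        · simp [h2t, Prod.ext_iff]
      · by_cases hi3 : i = 3
        · subst hi3
          cases t
          · simp [h3f, Prod.ext_iff, hi1, hi2]
          · simp [h3t, Prod.ext_iff, hi1, hi2]
        · rw [hout (i, t) hi1 hi2 hi3]
          simp [Prod.ext_iff, Ne.symm hi1, Ne.symm hi2]
  rcases z2cases (b.repr v (1, false)) with h | h
  · left; rw [hv', h, zero_smul]
  · right; rw [hv', h, one_smul]

end Main

/-- There is a `3`-coloring of the copies of
`U = span{e₁, e₂, e₃, e₁* + e₂*, e₃*}` in the countably infinite dimensional symplectic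
space `(V, β)` over `GF(2)` such that every copy of `W = span{e₁, e₂, e₃, e₁*, e₂*, e₃*}`
in `V` contains two copies of `U` of different colors; in particular no copy of `W`
is monochromatic.  Here `e_i = b (i, false)` and `e_i* = b (i, true)`. -/
theorem no_monochromatic_copy_of_W
    (V : Type*) [AddCommGroup V] [Module (ZMod 2) V]
    (β : V →ₗ[ZMod 2] V →ₗ[ZMod 2] ZMod 2)
    (b : Basis (ℕ × Bool) (ZMod 2) V)
    (halt : ∀ v : V, β v v = 0)
    (hef : ∀ i j : ℕ, β (b (i, false)) (b (j, true)) = if i = j then 1 else 0)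
    (hee : ∀ i j : ℕ, β (b (i, false)) (b (j, false)) = 0)
    (hff : ∀ i j : ℕ, β (b (i, true)) (b (j, true)) = 0) :
    ∃ c : Submodule (ZMod 2) V → Fin 3,
      ∀ W' : Submodule (ZMod 2) V,
        IsIsometric β W'
          (span (ZMod 2) ({b (1, false), b (2, false), b (3, false),
            b (1, true), b (2, true), b (3, true)} : Set V)) →
        ∃ U' U'' : Submodule (ZMod 2) V, U' ≤ W' ∧ U'' ≤ W' ∧
          IsIsometric β U'
            (span (ZMod 2) ({b (1, false), b (2, false), b (3, false),
              b (1, true) + b (2, true), b (3, true)} : Set V)) ∧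
          IsIsometric β U''
            (span (ZMod 2) ({b (1, false), b (2, false), b (3, false),
              b (1, true) + b (2, true), b (3, true)} : Set V)) ∧
          c U' ≠ c U'' := by
  classical
  set W₀ : Submodule (ZMod 2) V := span (ZMod 2) ({b (1, false), b (2, false), b (3, false),
    b (1, true), b (2, true), b (3, true)} : Set V) with hW₀def
  set U₀ : Submodule (ZMod 2) V := span (ZMod 2) ({b (1, false), b (2, false), b (3, false),
    b (1, true) + b (2, true), b (3, true)} : Set V) with hU₀def
  have hsymm := symmB β halt
  -- memberships
  have hE1W : b (1, false) ∈ W₀ := subset_span (by simp)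
  have hE2W : b (2, false) ∈ W₀ := subset_span (by simp)
  have hF1W : b (1, true) ∈ W₀ := subset_span (by simp)
  have hF2W : b (2, true) ∈ W₀ := subset_span (by simp)
  have hE12W : b (1, false) + b (2, false) ∈ W₀ := add_mem hE1W hE2W
  have hE1F1W : b (1, false) + b (1, true) ∈ W₀ := add_mem hE1W hF1W
  have hU₀W₀ : U₀ ≤ W₀ := by
    rw [hU₀def, span_le]
    rintro v hv
    simp only [Set.mem_insert_iff, Set.mem_singleton_iff] at hv
    rcases hv with rfl | rfl | rfl | rfl | rfl
    · exact hE1W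
    · exact hE2W
    · exact subset_span (by simp)
    · exact add_mem hF1W hF2W
    · exact subset_span (by simp)
  have hE12U₀ : b (1, false) + b (2, false) ∈ U₀ :=
    add_mem (subset_span (by simp)) (subset_span (by simp))
  -- nonzero
  have hbne : ∀ p q : ℕ × Bool, p ≠ q → b p + b q ≠ 0 := by
    intro p q hpq h
    rw [add_eq_zero_iff_eq_neg, negV] at h
    exact hpq (b.injective h)
  have hE1ne : b (1, false) ≠ 0 := b.ne_zero _
  have hE2ne : b (2, false) ≠ 0 := b.ne_zero _
  have hF1ne : b (1, true) ≠ 0 := b.ne_zero _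
  have hE1F1ne : b (1, false) + b (1, true) ≠ 0 := hbne _ _ (by simp)
  have hE12ne : b (1, false) + b (2, false) ≠ 0 := hbne _ _ (by simp)
  -- beta values
  have hb1 : β (b (1, false) + b (2, false)) (b (1, true)) = 1 := by
    simp [map_add, hef]
  have hb2 : β (b (1, true)) (b (1, false)) = 1 := by
    rw [hsymm]; simp [hef]
  have hb3 : β (b (1, false) + b (2, false)) (b (2, true)) = 1 := by
    simp [map_add, hef]
  have hb4 : β (b (2, true)) (b (2, false)) = 1 := by
    rw [hsymm]; simp [hef]
  have hb5 : β (b (1, false) + b (2, false)) (b (1, false) + b (1, true)) = 1 := by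
    simp [map_add, hef, hee]
  -- sigma constructors
  have mk1 : ∀ ρ, ρ ∈ W₀ → β (b (1, false) + b (2, false)) ρ = 1 →
      ∃ σ : V ≃ₗ[ZMod 2] V, (∀ a c : V, β (σ a) (σ c) = β a c) ∧
        (∀ w ∈ W₀, σ w ∈ W₀) ∧ σ (b (1, false) + b (2, false)) = ρ := by
    intro ρ hρW h1
    refine ⟨Tequiv β halt ((b (1, false) + b (2, false)) + ρ), fun a c => Tmap_iso β halt _ a c,
      fun w hw => ?_, Tequiv_send β halt _ _ h1⟩
    exact add_mem hw (smul_mem _ _ (add_mem hE12W hρW))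
  have mk2 : ∀ ρ t, ρ ∈ W₀ → t ∈ W₀ → β (b (1, false) + b (2, false)) t = 1 → β t ρ = 1 →
      ∃ σ : V ≃ₗ[ZMod 2] V, (∀ a c : V, β (σ a) (σ c) = β a c) ∧
        (∀ w ∈ W₀, σ w ∈ W₀) ∧ σ (b (1, false) + b (2, false)) = ρ := by
    intro ρ t hρW htW h1 h2
    refine ⟨(Tequiv β halt ((b (1, false) + b (2, false)) + t)).trans (Tequiv β halt (t + ρ)),
      fun a c => ?_, fun w hw => ?_, ?_⟩
    · rw [LinearEquiv.trans_apply, LinearEquiv.trans_apply]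
      exact (Tmap_iso β halt (t + ρ) _ _).trans (Tmap_iso β halt _ a c)
    · rw [LinearEquiv.trans_apply]
      have hin : Tequiv β halt ((b (1, false) + b (2, false)) + t) w ∈ W₀ :=
        add_mem hw (smul_mem _ _ (add_mem hE12W htW))
      exact add_mem hin (smul_mem _ _ (add_mem htW hρW))
    · rw [LinearEquiv.trans_apply, Tequiv_send β halt _ _ h1, Tequiv_send β halt _ _ h2]
  -- the coloring
  refine ⟨fun X => if (∃ v ∈ X, v ≠ 0 ∧ (∀ w ∈ X, β v w = 0) ∧ Qf b v = 1)
    then (1 : Fin 3) else 0, ?_⟩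
  intro W' hWiso
  obtain ⟨f, hf⟩ := hWiso
  have hfsymm : ∀ a c : W₀, β ((f.symm a : W') : V) ((f.symm c : W') : V) = β (a : V) (c : V) := by
    intro a c
    rw [hf (f.symm a) (f.symm c)]
    simp
  -- the copy construction
  have copy : ∀ (ρ : V) (hρW : ρ ∈ W₀), ρ ≠ 0 →
      ∀ (σ : V ≃ₗ[ZMod 2] V), (∀ a c : V, β (σ a) (σ c) = β a c) →
      (∀ w ∈ W₀, σ w ∈ W₀) → σ (b (1, false) + b (2, false)) = ρ →
      ∃ U' : Submodule (ZMod 2) V, U' ≤ W' ∧ IsIsometric β U' U₀ ∧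
        ((f.symm ⟨ρ, hρW⟩ : W') : V) ∈ U' ∧ ((f.symm ⟨ρ, hρW⟩ : W') : V) ≠ 0 ∧
        (∀ w ∈ U', β ((f.symm ⟨ρ, hρW⟩ : W') : V) w = 0) ∧
        (∀ v ∈ U', (∀ w ∈ U', β v w = 0) → v = 0 ∨ v = ((f.symm ⟨ρ, hρW⟩ : W') : V)) := by
    intro ρ hρW hρ0 σ hσiso hσW hσr
    have hσU : ∀ u : U₀, σ (u : V) ∈ W₀ := fun u => hσW _ (hU₀W₀ u.2)
    set g : U₀ →ₗ[ZMod 2] V := W'.subtype ∘ₗ (f.symm : W₀ →ₗ[ZMod 2] W') ∘ₗ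
      (LinearMap.codRestrict W₀ ((σ : V →ₗ[ZMod 2] V).domRestrict U₀) hσU) with hgdef
    have hg : ∀ u : U₀, g u = ((f.symm ⟨σ (u : V), hσU u⟩ : W') : V) := fun u => rfl
    have hβg : ∀ u u' : U₀, β (g u) (g u') = β (u : V) (u' : V) := by
      intro u u'
      rw [hg, hg, hfsymm]
      exact hσiso _ _
    have hginj : Function.Injective g := by
      intro u u' huv
      rw [hg, hg] at huv
      have h1 : f.symm ⟨σ (u : V), hσU u⟩ = f.symm ⟨σ (u' : V), hσU u'⟩ :=
        Subtype.coe_injective huv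
      have h3 : σ (u : V) = σ (u' : V) := congrArg Subtype.val (f.symm.injective h1)
      exact Subtype.coe_injective (σ.injective h3)
    have key : ∀ x : LinearMap.range g, (x : V) = g ((LinearEquiv.ofInjective g hginj).symm x) := by
      intro x
      conv_lhs => rw [← (LinearEquiv.ofInjective g hginj).apply_symm_apply x]
      rw [LinearEquiv.ofInjective_apply]
    refine ⟨LinearMap.range g, ?_, ?_, ?_, ?_, ?_, ?_⟩
    · rintro v ⟨u, rfl⟩
      rw [hg]
      exact SetLike.coe_mem _
    · refine ⟨(LinearEquiv.ofInjective g hginj).symm, fun x y => ?_⟩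
      rw [key x, key y, hβg]
    · refine ⟨⟨b (1, false) + b (2, false), hE12U₀⟩, ?_⟩
      rw [hg]
      have h4 : (⟨σ ((⟨b (1, false) + b (2, false), hE12U₀⟩ : U₀) : V), hσU _⟩ : W₀)
          = ⟨ρ, hρW⟩ := Subtype.ext hσr
      rw [h4]
    · intro h0
      apply hρ0
      have h5 : f.symm ⟨ρ, hρW⟩ = 0 := Subtype.coe_injective (by simpa using h0)
      have h6 : (⟨ρ, hρW⟩ : W₀) = 0 := by
        rw [← map_zero f.symm] at h5
        exact f.symm.injective h5
      simpa using congrArg Subtype.val h6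
    · rintro w ⟨u, rfl⟩
      rw [hg, hfsymm]
      show β ρ (σ (u : V)) = 0
      rw [← hσr, hσiso]
      exact radU₀_mem β b halt hef hee hff _ u.2
    · rintro v ⟨u, rfl⟩ hvrad
      have hrado : ∀ w ∈ U₀, β (u : V) w = 0 := by
        intro w hw
        rw [← hβg u ⟨w, hw⟩]
        exact hvrad (g ⟨w, hw⟩) ⟨⟨w, hw⟩, rfl⟩
      rcases radU₀_uniq β b halt hef hee hff (u : V) u.2 hrado with h | h
      · left
        have h7 : u = 0 := Subtype.coe_injective (by simpa using h)
        rw [h7, map_zero]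
      · right
        have h8 : u = ⟨b (1, false) + b (2, false), hE12U₀⟩ := Subtype.ext h
        rw [h8, hg]
        have h9 : (⟨σ ((⟨b (1, false) + b (2, false), hE12U₀⟩ : U₀) : V), hσU _⟩ : W₀)
            = ⟨ρ, hρW⟩ := Subtype.ext hσr
        rw [h9]
  -- the five sigmas
  obtain ⟨σ1, hσ1i, hσ1W, hσ1r⟩ := mk2 (b (1, false)) (b (1, true)) hE1W hF1W hb1 hb2
  obtain ⟨σ2, hσ2i, hσ2W, hσ2r⟩ := mk2 (b (2, false)) (b (2, true)) hE2W hF2W hb3 hb4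
  obtain ⟨σ3, hσ3i, hσ3W, hσ3r⟩ := mk1 (b (1, true)) hF1W hb1
  obtain ⟨σ4, hσ4i, hσ4W, hσ4r⟩ := mk1 (b (1, false) + b (1, true)) hE1F1W hb5
  -- the five copies
  obtain ⟨U1, hU1W, hU1iso, hm1, hn1, hp1, hq1⟩ := copy _ hE1W hE1ne σ1 hσ1i hσ1W hσ1r
  obtain ⟨U2, hU2W, hU2iso, hm2, hn2, hp2, hq2⟩ := copy _ hE2W hE2ne σ2 hσ2i hσ2W hσ2r
  obtain ⟨U3, hU3W, hU3iso, hm3, hn3, hp3, hq3⟩ := copy _ hF1W hF1ne σ3 hσ3i hσ3W hσ3r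
  obtain ⟨U4, hU4W, hU4iso, hm4, hn4, hp4, hq4⟩ := copy _ hE1F1W hE1F1ne σ4 hσ4i hσ4W hσ4r
  obtain ⟨U5, hU5W, hU5iso, hm5, hn5, hp5, hq5⟩ :=
    copy _ hE12W hE12ne (LinearEquiv.refl (ZMod 2) V) (fun a c => rfl) (fun w hw => hw) rfl
  -- r-values
  set x : V := ((f.symm ⟨b (1, false), hE1W⟩ : W') : V) with hx
  set y : V := ((f.symm ⟨b (1, true), hF1W⟩ : W') : V) with hy
  set z : V := ((f.symm ⟨b (2, false), hE2W⟩ : W') : V) with hz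
  have hr4 : ((f.symm ⟨b (1, false) + b (1, true), hE1F1W⟩ : W') : V) = x + y := by
    rw [show (⟨b (1, false) + b (1, true), hE1F1W⟩ : W₀)
      = ⟨b (1, false), hE1W⟩ + ⟨b (1, true), hF1W⟩ from rfl, map_add]
    rfl
  have hr5 : ((f.symm ⟨b (1, false) + b (2, false), hE12W⟩ : W') : V) = x + z := by
    rw [show (⟨b (1, false) + b (2, false), hE12W⟩ : W₀)
      = ⟨b (1, false), hE1W⟩ + ⟨b (2, false), hE2W⟩ from rfl, map_add]
    rfl
  have hβxy : β x y = 1 := by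
    rw [hx, hy, hfsymm]
    simp [hef]
  have hβxz : β x z = 0 := by
    rw [hx, hz, hfsymm]
    simp [hee]
  have polar1 : Qf b (x + y) = Qf b x + Qf b y + 1 := by
    rw [Qf_polar β b halt hef hee hff, hβxy]
  have polar2 : Qf b (x + z) = Qf b x + Qf b z := by
    rw [Qf_polar β b halt hef hee hff, hβxz, add_zero]
  -- coloring evaluation
  have color : ∀ (U1 : Submodule (ZMod 2) V) (r1 : V), r1 ∈ U1 → r1 ≠ 0 →
      (∀ w ∈ U1, β r1 w = 0) → (∀ v ∈ U1, (∀ w ∈ U1, β v w = 0) → v = 0 ∨ v = r1) →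
      ((∃ v ∈ U1, v ≠ 0 ∧ (∀ w ∈ U1, β v w = 0) ∧ Qf b v = 1) ↔ Qf b r1 = 1) := by
    intro U1 r1 hm hn hp hq
    constructor
    · rintro ⟨v, hvm, hv0, hvr, hvq⟩
      rcases hq v hvm hvr with rfl | rfl
      · exact absurd rfl hv0
      · exact hvq
    · intro hQ
      exact ⟨r1, hm, hn, hp, hQ⟩
  have conc : ∀ (U1 U2 : Submodule (ZMod 2) V) (r1 r2 : V),
      U1 ≤ W' → U2 ≤ W' → IsIsometric β U1 U₀ → IsIsometric β U2 U₀ →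
      r1 ∈ U1 → r1 ≠ 0 → (∀ w ∈ U1, β r1 w = 0) →
      (∀ v ∈ U1, (∀ w ∈ U1, β v w = 0) → v = 0 ∨ v = r1) →
      r2 ∈ U2 → r2 ≠ 0 → (∀ w ∈ U2, β r2 w = 0) →
      (∀ v ∈ U2, (∀ w ∈ U2, β v w = 0) → v = 0 ∨ v = r2) →
      Qf b r1 ≠ Qf b r2 →
      ∃ U' U'' : Submodule (ZMod 2) V, U' ≤ W' ∧ U'' ≤ W' ∧
        IsIsometric β U' U₀ ∧ IsIsometric β U'' U₀ ∧
        (if (∃ v ∈ U', v ≠ 0 ∧ (∀ w ∈ U', β v w = 0) ∧ Qf b v = 1) then (1 : Fin 3) else 0) ≠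
        (if (∃ v ∈ U'', v ≠ 0 ∧ (∀ w ∈ U'', β v w = 0) ∧ Qf b v = 1) then (1 : Fin 3) else 0) := by
    intro U1 U2 r1 r2 hW1 hW2 hi1 hi2 hm1' hn1' hp1' hq1' hm2' hn2' hp2' hq2' hne
    refine ⟨U1, U2, hW1, hW2, hi1, hi2, ?_⟩
    by_cases hQ1 : Qf b r1 = 1
    · rw [if_pos ((color U1 r1 hm1' hn1' hp1' hq1').mpr hQ1),
        if_neg (fun h => hne (by rw [hQ1, (color U2 r2 hm2' hn2' hp2' hq2').mp h]))]
      decide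
    · have hQ1' : Qf b r1 = 0 := (z2cases _).resolve_right hQ1
      have hQ2 : Qf b r2 = 1 := by
        rcases z2cases (Qf b r2) with h | h
        · exact absurd (hQ1'.trans h.symm) hne
        · exact h
      rw [if_neg (fun h => hQ1 ((color U1 r1 hm1' hn1' hp1' hq1').mp h)),
        if_pos ((color U2 r2 hm2' hn2' hp2' hq2').mpr hQ2)]
      decide
  -- selection
  by_cases h1 : Qf b x = Qf b y
  · by_cases h2 : Qf b x = Qf b (x + y)
    · have hQx : Qf b x = 1 := by
        have e : Qf b x = Qf b x + Qf b x + 1 := by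
          conv_lhs => rw [h2]
          rw [polar1, ← h1]
        rcases z2cases (Qf b x) with ha | ha
        · rw [ha] at e
          exact absurd e (by decide)
        · exact ha
      by_cases h3 : Qf b x = Qf b z
      · have hQxz : Qf b (x + z) = 0 := by
          rw [polar2, ← h3, hQx]
          decide
        refine conc U1 U5 _ _ hU1W hU5W hU1iso hU5iso hm1 hn1 hp1 hq1 hm5 hn5 hp5 hq5 ?_
        rw [hr5, hQx, hQxz]
        decide
      · exact conc U1 U2 _ _ hU1W hU2W hU1iso hU2iso hm1 hn1 hp1 hq1 hm2 hn2 hp2 hq2 h3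
    · refine conc U1 U4 _ _ hU1W hU4W hU1iso hU4iso hm1 hn1 hp1 hq1 hm4 hn4 hp4 hq4 ?_
      rw [hr4]
      exact h2
  · exact conc U1 U3 _ _ hU1W hU3W hU1iso hU3iso hm1 hn1 hp1 hq1 hm3 hn3 hp3 hq3 h1
end
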